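/- arXiv:2504.05285 — 2 statements merged into one kernel-verified Lean document; each statement's English description precedes it below -/
import Mathlib

section
/- For q in the quaternions with |q| = 1, the element π(q) = q̃·q (where q̃ flips the sign of the i-component) has zero i-component and norm 1; that is, π maps the unit sphere S³ ⊂ ℍ into the unit sphere of the 3-dimensional real subspace spanned by 1, j, k. -/
open Quaternion

noncomputable def tildeQ (q : ℍ[ℝ]) : ℍ[ℝ] := ⟨q.re, -q.imI, q.imJ, q.imK⟩

noncomputable def hopfPi (q : ℍ[ℝ]) : ℍ[ℝ] := tildeQ q * q

theorem hopfPi_mem_sphere (q : ℍ[ℝ]) (hq : ‖q‖ = 1) :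
    (hopfPi q).imI = 0 ∧ ‖hopfPi q‖ = 1 := by
  constructor
  · rw [hopfPi, Quaternion.imI_mul]; simp [tildeQ]; ring
  · have h1 : ‖tildeQ q‖ = ‖q‖ := by
      rw [norm_eq_sqrt_real_inner, norm_eq_sqrt_real_inner]
      rw [Quaternion.inner_self, Quaternion.inner_self, Quaternion.normSq_def', Quaternion.normSq_def']
      simp [Quaternion.normSq_def', tildeQ]
    rw [hopfPi, norm_mul, h1, hq, one_mul]
end

section
/- For q ∈ ℍ with |q| = 1 and any φ ∈ ℝ, π(e^{iφ} q) = π(q), where π(q) = q̃·q and q̃ flips the sign of the i-component of q, and e^{iφ} = cos φ + sin φ · i. -/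
open Quaternion Real

noncomputable def eIphi (φ : ℝ) : ℍ[ℝ] := ⟨Real.cos φ, Real.sin φ, 0, 0⟩

@[simp] lemma tildeQ_re (q : ℍ[ℝ]) : (tildeQ q).re = q.re := rfl
@[simp] lemma tildeQ_imI (q : ℍ[ℝ]) : (tildeQ q).imI = -q.imI := rfl
@[simp] lemma tildeQ_imJ (q : ℍ[ℝ]) : (tildeQ q).imJ = q.imJ := rfl
@[simp] lemma tildeQ_imK (q : ℍ[ℝ]) : (tildeQ q).imK = q.imK := rfl
@[simp] lemma eIphi_re (φ : ℝ) : (eIphi φ).re = Real.cos φ := rfl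
@[simp] lemma eIphi_imI (φ : ℝ) : (eIphi φ).imI = Real.sin φ := rfl
@[simp] lemma eIphi_imJ (φ : ℝ) : (eIphi φ).imJ = 0 := rfl
@[simp] lemma eIphi_imK (φ : ℝ) : (eIphi φ).imK = 0 := rfl

theorem hopfPi_circle_invariant (q : ℍ[ℝ]) (hq : ‖q‖ = 1) (φ : ℝ) :
    hopfPi (eIphi φ * q) = hopfPi q := by
  have h := Real.sin_sq_add_cos_sq φ
  have hc : Real.cos φ ^ 2 = 1 - Real.sin φ ^ 2 := by linarith
  simp only [hopfPi, Quaternion.re_mul, Quaternion.imI_mul,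
    Quaternion.imJ_mul, Quaternion.imK_mul]
  ext <;> simp <;> ring_nf <;> rw [hc] <;> ring
end
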